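/- arXiv:2306.13111 — 2 statements merged into one kernel-verified Lean document; each statement's English description precedes it below -/
import Mathlib

section
/- Let d, D be positive integers and A ∈ ℝ^{d×D} with columns a_1, …, a_D. For I ⊆ {1,…,D}, let λ(I) = inf { Σ_{i∈I} ⟨u, a_i⟩² : ‖u‖ = 1 } and A_0² = min_I (λ(I) + λ(I^c)); let I_0 achieve this minimum and let u_1, u_2 ∈ ℝ^d be unit vectors with Σ_{i∈I_0} ⟨u_1, a_i⟩² = λ(I_0) and Σ_{i∈I_0^c} ⟨u_2, a_i⟩² = λ(I_0^c). Let X ∈ ℝ^{2×d} have rows (u_1+u_2)^T and 0, and let Y ∈ ℝ^{2×d} have rows u_1^T and u_2^T. Then ‖β_A(X) − β_A(Y)‖_F² = 2·A_0² and min(‖X − Y‖_F, ‖X − PY‖_F)² = 2 (P exchanging rows), so the lower Lipschitz constant A_0 of β_A is achieved. -/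
open scoped BigOperators

namespace PR

noncomputable section

/-- Euclidean inner product on `ℝ^d`. -/
def dot {d : ℕ} (x y : Fin d → ℝ) : ℝ := ∑ i, x i * y i

/-- The `k`-th column of `A`. -/
def col {d D : ℕ} (A : Matrix (Fin d) (Fin D) ℝ) (k : Fin D) : Fin d → ℝ := fun i => A i k

/-- Analysis operator `T_A(x)_k = ⟨x, a_k⟩`. -/
def TA {d D : ℕ} (A : Matrix (Fin d) (Fin D) ℝ) (x : Fin d → ℝ) : Fin D → ℝ :=
  fun k => dot x (col A k)

/-- Phase-retrieval map `α_A(x)_k = |⟨x, a_k⟩|`. -/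
def alpha {d D : ℕ} (A : Matrix (Fin d) (Fin D) ℝ) (x : Fin d → ℝ) : Fin D → ℝ :=
  fun k => |dot x (col A k)|

/-- Sorting encoder `β_A(X)`: its `k`-th column is the decreasingly sorted pair
`(max(⟨x₁,a_k⟩,⟨x₂,a_k⟩), min(⟨x₁,a_k⟩,⟨x₂,a_k⟩))`. -/
def beta {d D : ℕ} (A : Matrix (Fin d) (Fin D) ℝ) (X : Matrix (Fin 2) (Fin d) ℝ) :
    Matrix (Fin 2) (Fin D) ℝ :=
  Matrix.of fun j k =>
    if j = 0 then max (dot (X 0) (col A k)) (dot (X 1) (col A k))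
    else min (dot (X 0) (col A k)) (dot (X 1) (col A k))

/-- The 2×2 permutation matrix exchanging the two rows. -/
def P : Matrix (Fin 2) (Fin 2) ℝ := Matrix.of ![![0, 1], ![1, 0]]

/-- Euclidean norm on `ℝ^n`. -/
def vnorm {n : ℕ} (x : Fin n → ℝ) : ℝ := Real.sqrt (∑ i, (x i) ^ 2)

/-- Frobenius norm on `ℝ^{2×n}`. -/
def fnorm {n : ℕ} (X : Matrix (Fin 2) (Fin n) ℝ) : ℝ := Real.sqrt (∑ i, ∑ j, (X i j) ^ 2)

/-- Operator norm of `T_A` (largest singular value of `A`): supremum of `‖T_A x‖`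
over unit vectors `x`. -/
def sigma1 {d D : ℕ} (A : Matrix (Fin d) (Fin D) ℝ) : ℝ :=
  sSup {c : ℝ | ∃ x : Fin d → ℝ, vnorm x = 1 ∧ c = vnorm (TA A x)}

/-- `λ(I) = inf { Σ_{i∈I} ⟨u, a_i⟩² : ‖u‖ = 1 }`, the square of the `d`-th singular value
of the submatrix `A[I]`. -/
def lam {d D : ℕ} (A : Matrix (Fin d) (Fin D) ℝ) (I : Finset (Fin D)) : ℝ :=
  sInf {c : ℝ | ∃ u : Fin d → ℝ, vnorm u = 1 ∧ c = ∑ i ∈ I, (dot u (col A i)) ^ 2}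

/-- `A₀² = min_I (λ(I) + λ(Iᶜ))`. -/
def A0sq {d D : ℕ} (A : Matrix (Fin d) (Fin D) ℝ) : ℝ :=
  sInf {c : ℝ | ∃ I : Finset (Fin D), c = lam A I + lam A Iᶜ}


lemma col_calc (p q : ℝ) :
    (max (p+q) 0 - max p q)^2 + (min (p+q) 0 - min p q)^2 = 2 * min (p^2) (q^2) := by
  rcases le_total p q with h | h <;> rcases le_total (p+q) 0 with h2 | h2
  · rw [max_eq_right h, min_eq_left h, max_eq_right h2, min_eq_left h2,
      min_eq_right (by nlinarith : q^2 ≤ p^2)]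
    ring
  · rw [max_eq_right h, min_eq_left h, max_eq_left h2, min_eq_right h2,
      min_eq_left (by nlinarith : p^2 ≤ q^2)]
    ring
  · rw [max_eq_left h, min_eq_right h, max_eq_right h2, min_eq_left h2,
      min_eq_left (by nlinarith : p^2 ≤ q^2)]
    ring
  · rw [max_eq_left h, min_eq_right h, max_eq_left h2, min_eq_right h2,
      min_eq_right (by nlinarith : q^2 ≤ p^2)]
    ring

lemma lam_nonneg {d D : ℕ} (A : Matrix (Fin d) (Fin D) ℝ) (I : Finset (Fin D)) :
    0 ≤ lam A I := by
  apply Real.sInf_nonneg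
  rintro c ⟨u, hu, rfl⟩
  positivity

lemma lam_le {d D : ℕ} (A : Matrix (Fin d) (Fin D) ℝ) (I : Finset (Fin D))
    (u : Fin d → ℝ) (hu : vnorm u = 1) :
    lam A I ≤ ∑ i ∈ I, (dot u (col A i)) ^ 2 := by
  apply csInf_le
  · exact ⟨0, by rintro c ⟨v, hv, rfl⟩; positivity⟩
  · exact ⟨u, hu, rfl⟩

lemma A0sq_le {d D : ℕ} (A : Matrix (Fin d) (Fin D) ℝ) (I : Finset (Fin D)) :
    A0sq A ≤ lam A I + lam A Iᶜ := by
  apply csInf_le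
  · exact ⟨0, by rintro c ⟨J, rfl⟩; exact add_nonneg (lam_nonneg A J) (lam_nonneg A Jᶜ)⟩
  · exact ⟨I, rfl⟩

lemma fnorm_sq {n : ℕ} (M : Matrix (Fin 2) (Fin n) ℝ) :
    fnorm M ^ 2 = ∑ i, ∑ j, (M i j) ^ 2 := by
  apply Real.sq_sqrt
  positivity

lemma vnorm_one_sum {n : ℕ} (u : Fin n → ℝ) (hu : vnorm u = 1) :
    ∑ i, (u i) ^ 2 = 1 := by
  have h0 : (0:ℝ) ≤ ∑ i, (u i) ^ 2 := by positivity
  have := Real.sq_sqrt h0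
  rw [show Real.sqrt (∑ i, (u i)^2) = 1 from hu] at this
  linarith

/-- the lower Lipschitz constant `A₀` of `β_A` is achieved at
`X = [(u₁+u₂)ᵀ; 0]` and `Y = [u₁ᵀ; u₂ᵀ]`. -/
theorem beta_lower_lipschitz_achieved
    {d D : ℕ} (hd : 0 < d) (hD : 0 < D) (A : Matrix (Fin d) (Fin D) ℝ)
    (I₀ : Finset (Fin D)) (hI₀ : lam A I₀ + lam A I₀ᶜ = A0sq A)
    (u₁ u₂ : Fin d → ℝ) (hu₁ : vnorm u₁ = 1) (hu₂ : vnorm u₂ = 1)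
    (h₁ : ∑ i ∈ I₀, (dot u₁ (col A i)) ^ 2 = lam A I₀)
    (h₂ : ∑ i ∈ I₀ᶜ, (dot u₂ (col A i)) ^ 2 = lam A I₀ᶜ) :
    (fnorm (beta A (Matrix.of ![u₁ + u₂, 0]) - beta A (Matrix.of ![u₁, u₂]))) ^ 2
        = 2 * A0sq A ∧
      (min (fnorm ((Matrix.of ![u₁ + u₂, 0] : Matrix (Fin 2) (Fin d) ℝ) -
              Matrix.of ![u₁, u₂]))
          (fnorm ((Matrix.of ![u₁ + u₂, 0] : Matrix (Fin 2) (Fin d) ℝ) -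
              P * Matrix.of ![u₁, u₂]))) ^ 2 = 2 := by

  classical
  set X : Matrix (Fin 2) (Fin d) ℝ := Matrix.of ![u₁ + u₂, 0] with hX
  set Y : Matrix (Fin 2) (Fin d) ℝ := Matrix.of ![u₁, u₂] with hY
  set p : Fin D → ℝ := fun k => dot u₁ (col A k) with hp
  set q : Fin D → ℝ := fun k => dot u₂ (col A k) with hq
  have hXr0 : X 0 = u₁ + u₂ := rfl
  have hXr1 : X 1 = 0 := rfl
  have hYr0 : Y 0 = u₁ := rfl
  have hYr1 : Y 1 = u₂ := rfl
  have hdotadd : ∀ k, dot (u₁ + u₂) (col A k) = p k + q k := by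
    intro k
    simp only [dot, hp, hq, Pi.add_apply, add_mul, Finset.sum_add_distrib]
  have hdot0 : ∀ k, dot (0 : Fin d → ℝ) (col A k) = 0 := by
    intro k
    simp [dot]
  constructor
  · -- first part
    have key : (fnorm (beta A X - beta A Y)) ^ 2
        = ∑ k, 2 * min ((p k)^2) ((q k)^2) := by
      rw [fnorm_sq, Fin.sum_univ_two, ← Finset.sum_add_distrib]
      refine Finset.sum_congr rfl fun k _ => ?_
      have e0 : (beta A X - beta A Y) 0 k
          = max (p k + q k) 0 - max (p k) (q k) := by
        simp [beta, Matrix.sub_apply, hXr0, hXr1, hYr0, hYr1, hdotadd, hdot0, hp, hq]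
      have e1 : (beta A X - beta A Y) 1 k
          = min (p k + q k) 0 - min (p k) (q k) := by
        simp [beta, Matrix.sub_apply, hXr0, hXr1, hYr0, hYr1, hdotadd, hdot0, hp, hq]
      rw [e0, e1, col_calc]
    rw [key, ← Finset.mul_sum]
    congr 1
    have hle : ∑ k, min ((p k)^2) ((q k)^2) ≤ A0sq A := by
      rw [← hI₀, ← h₁, ← h₂]
      rw [← Finset.sum_add_sum_compl I₀ (fun k => min ((p k)^2) ((q k)^2))]
      exact add_le_add
        (Finset.sum_le_sum fun k _ => min_le_left _ _)
        (Finset.sum_le_sum fun k _ => min_le_right _ _)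
    have hge : A0sq A ≤ ∑ k, min ((p k)^2) ((q k)^2) := by
      set J : Finset (Fin D) := Finset.univ.filter (fun k => (p k)^2 ≤ (q k)^2) with hJ
      have split : ∑ k, min ((p k)^2) ((q k)^2)
          = ∑ k ∈ J, (p k)^2 + ∑ k ∈ Jᶜ, (q k)^2 := by
        rw [← Finset.sum_add_sum_compl J (fun k => min ((p k)^2) ((q k)^2))]
        congr 1
        · refine Finset.sum_congr rfl fun k hk => ?_
          exact min_eq_left (by simpa [hJ] using hk)
        · refine Finset.sum_congr rfl fun k hk => ?_
          refine min_eq_right (le_of_not_ge ?_)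
          simpa [hJ] using hk
      calc A0sq A ≤ lam A J + lam A Jᶜ := A0sq_le A J
        _ ≤ ∑ k ∈ J, (dot u₁ (col A k))^2 + ∑ k ∈ Jᶜ, (dot u₂ (col A k))^2 :=
            add_le_add (lam_le A J u₁ hu₁) (lam_le A Jᶜ u₂ hu₂)
        _ = ∑ k, min ((p k)^2) ((q k)^2) := split.symm
    exact le_antisymm hle hge
  · -- second part
    have hs2 : (0:ℝ) ≤ 2 := by norm_num
    have f1 : fnorm (X - Y) = Real.sqrt 2 := by
      unfold fnorm
      congr 1
      rw [Fin.sum_univ_two]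
      have e0 : ∀ j, ((X - Y) 0 j)^2 = (u₂ j)^2 := by
        intro j
        simp only [Matrix.sub_apply, hXr0, hYr0, Pi.add_apply]
        ring
      have e1 : ∀ j, ((X - Y) 1 j)^2 = (u₂ j)^2 := by
        intro j
        simp only [Matrix.sub_apply, hXr1, hYr1, Pi.zero_apply]
        ring
      rw [Finset.sum_congr rfl fun j _ => e0 j, Finset.sum_congr rfl fun j _ => e1 j,
        vnorm_one_sum u₂ hu₂]
      norm_num
    have hPY0 : ∀ j, (P * Y) 0 j = u₂ j := by
      intro j
      simp [P, Matrix.mul_apply, Fin.sum_univ_two, hYr0, hYr1]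
    have hPY1 : ∀ j, (P * Y) 1 j = u₁ j := by
      intro j
      simp [P, Matrix.mul_apply, Fin.sum_univ_two, hYr0, hYr1]
    have f2 : fnorm (X - P * Y) = Real.sqrt 2 := by
      unfold fnorm
      congr 1
      rw [Fin.sum_univ_two]
      have e0 : ∀ j, ((X - P * Y) 0 j)^2 = (u₁ j)^2 := by
        intro j
        rw [Matrix.sub_apply, hPY0]
        simp only [hXr0, Pi.add_apply]
        ring
      have e1 : ∀ j, ((X - P * Y) 1 j)^2 = (u₁ j)^2 := by
        intro j
        rw [Matrix.sub_apply, hPY1]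
        simp only [hXr1, Pi.zero_apply]
        ring
      rw [Finset.sum_congr rfl fun j _ => e0 j, Finset.sum_congr rfl fun j _ => e1 j,
        vnorm_one_sum u₁ hu₁]
      norm_num
    rw [f1, f2, min_self, Real.sq_sqrt hs2]


end

end PR
end

section
/- Let d, D be positive integers and A ∈ ℝ^{d×D} with columns a_1, …, a_D, and let X, Y ∈ ℝ^{2×d} with rows x_1^T, x_2^T and y_1^T, y_2^T respectively. Then ‖β_A(X) − β_A(Y)‖_F² = ½ (‖α_A(x_1 − x_2) − α_A(y_1 − y_2)‖² + ‖T_A(x_1 + x_2) − T_A(y_1 + y_2)‖²). -/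
open scoped BigOperators

namespace PR

noncomputable section

lemma key (p q r s : ℝ) :
    (max p q - max r s) ^ 2 + (min p q - min r s) ^ 2 =
      (1 / 2 : ℝ) * ((|p - q| - |r - s|) ^ 2 + ((p + q) - (r + s)) ^ 2) := by
  rcases le_total p q with h | h <;> rcases le_total r s with h' | h' <;>
    simp [max_eq_right, max_eq_left, min_eq_left, min_eq_right, h, h',
      abs_of_nonneg, abs_of_nonpos, sub_nonneg.mpr, sub_nonpos.mpr] <;> ring

lemma dot_sub {d : ℕ} (x y a : Fin d → ℝ) :
    dot (x - y) a = dot x a - dot y a := by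
  simp [dot, sub_mul, Finset.sum_sub_distrib]

lemma dot_add {d : ℕ} (x y a : Fin d → ℝ) :
    dot (x + y) a = dot x a + dot y a := by
  simp [dot, add_mul, Finset.sum_add_distrib]

/-- the Frobenius distance of sorted encodings decomposes as
`‖β_A(X) - β_A(Y)‖_F² = ½(‖α_A(x₁-x₂) - α_A(y₁-y₂)‖² + ‖T_A(x₁+x₂) - T_A(y₁+y₂)‖²)`. -/
theorem beta_distance_decomposition
    {d D : ℕ} (hd : 0 < d) (hD : 0 < D) (A : Matrix (Fin d) (Fin D) ℝ)
    (X Y : Matrix (Fin 2) (Fin d) ℝ) :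
    (fnorm (beta A X - beta A Y)) ^ 2 =
      (1 / 2 : ℝ) *
        ((vnorm (alpha A (X 0 - X 1) - alpha A (Y 0 - Y 1))) ^ 2 +
          (vnorm (TA A (X 0 + X 1) - TA A (Y 0 + Y 1))) ^ 2) := by
  have hnn : ∀ (n : ℕ) (f : Fin n → ℝ), (0:ℝ) ≤ ∑ i, (f i) ^ 2 :=
    fun n f => Finset.sum_nonneg fun i _ => sq_nonneg _
  have hnn2 : (0:ℝ) ≤ ∑ i : Fin 2, ∑ j, ((beta A X - beta A Y) i j) ^ 2 :=
    Finset.sum_nonneg fun i _ => hnn _ _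
  rw [fnorm, vnorm, vnorm, Real.sq_sqrt hnn2, Real.sq_sqrt (hnn _ _), Real.sq_sqrt (hnn _ _)]
  rw [Fin.sum_univ_two, ← Finset.sum_add_distrib, ← Finset.sum_add_distrib, Finset.mul_sum]
  refine Finset.sum_congr rfl fun k _ => ?_
  simp only [beta, alpha, TA, Matrix.sub_apply, Matrix.add_apply, Pi.sub_apply, Pi.add_apply,
    Matrix.of_apply, dot_sub, dot_add]
  norm_num
  exact key _ _ _ _


end

end PR
end
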